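/- For every integer M ≥ 0, the sum over n from 0 to M of ((1/2)_n)^2 / ((1)_n^2 (n+1)) equals 4(M+1)((1/2)_{M+1})^2 / ((1)_{M+1})^2. -/

import Mathlib

open Polynomial Finset

/-- Rising Pochhammer symbol over ℚ. -/
noncomputable def poch (x : ℚ) (n : ℕ) : ℚ := (ascPochhammer ℚ n).eval x

lemma poch_succ (x : ℚ) (n : ℕ) : poch x (n + 1) = poch x n * (x + n) :=
  ascPochhammer_succ_eval n x

lemma poch_one (n : ℕ) : poch 1 n = n.factorial :=
  ascPochhammer_eval_one ℚ n

noncomputable def i2PartialSum (n : ℕ) : ℚ := 4 * n * poch (1/2) n ^ 2 / poch 1 n ^ 2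

/-- Passing from `n` to `n + 1` multiplies `i2PartialSum` by `(2n+1)^2 / (4n(n+1))`, and
`(2n+1)^2 = 4n(n+1) + 1`: the excess is exactly the `n`-th summand. -/
lemma i2PartialSum_succ (n : ℕ) :
    i2PartialSum (n + 1) = i2PartialSum n + poch (1/2) n ^ 2 / (poch 1 n ^ 2 * (n + 1)) := by
  have hfact : (n.factorial : ℚ) ≠ 0 := by positivity
  rw [i2PartialSum, i2PartialSum, poch_succ, poch_succ, poch_one]
  push_cast
  field_simp
  ring

/-- the telescoped closed form
`∑_{n=0}^M ((1/2)_n)^2 / ((1)_n^2 (n+1)) = 4(M+1)((1/2)_{M+1})^2 / ((1)_{M+1})^2`. -/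
theorem vanHamme_I2_closed_form (M : ℕ) :
    ∑ n ∈ Finset.range (M + 1), (poch (1/2) n)^2 / ((poch 1 n)^2 * (n + 1)) =
      4 * (M + 1) * (poch (1/2) (M+1))^2 / (poch 1 (M+1))^2 := by
  have htelescope := Finset.sum_range_induction
    (fun n : ℕ => poch (1/2) n ^ 2 / (poch 1 n ^ 2 * (n + 1))) i2PartialSum
    (by simp [i2PartialSum]) (M + 1) fun n _ => i2PartialSum_succ n
  simpa [i2PartialSum] using htelescope
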